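/- Let n ≥ 1 and let λ_1 ≥ λ_2 ≥ ... ≥ λ_n be real numbers with Σ_{i=1}^n λ_i² = 1. Define I = {(i,j) : 1 ≤ i ≤ j ≤ n, λ_i − λ_j > 1}. Then Σ_{(i,j)∈I} [(λ_i − λ_j)² − 1] ≤ 1. -/
import Mathlib


open BigOperators

/-- Two-variable Cauchy–Schwarz: `(a-b)^2 ≤ (m+d) * (a^2/m + b^2/d)`. -/
lemma two_var_cs (a b m d : ℝ) (hm : 0 < m) (hd : 0 < d) :
    (a - b) ^ 2 ≤ (m + d) * (a ^ 2 / m + b ^ 2 / d) := by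
  have h1 : a ^ 2 / m + b ^ 2 / d = (a ^ 2 * d + b ^ 2 * m) / (m * d) := by
    field_simp
  rw [h1, ← mul_div_assoc, le_div_iff₀ (by positivity)]
  nlinarith [sq_nonneg (a * d + b * m), sq_nonneg (a - b)]

/-- Lemma 2.2 (inequality part): for `λ₁ ≥ … ≥ λ_n` with `∑ λᵢ² = 1`,
`∑_{(i,j)∈I} [(λᵢ − λⱼ)² − 1] ≤ 1` where `I = {(i,j) : i ≤ j, λᵢ − λⱼ > 1}`. -/
theorem gap_sum_le_one (n : ℕ) (hn : 1 ≤ n) (lam : Fin n → ℝ)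
    (hmono : Antitone lam) (hsum : ∑ i, (lam i) ^ 2 = 1) :
    ∑ p ∈ Finset.univ.filter
        (fun p : Fin n × Fin n => p.1 ≤ p.2 ∧ lam p.1 - lam p.2 > 1),
      ((lam p.1 - lam p.2) ^ 2 - 1) ≤ 1 := by
  classical
  set F : Finset (Fin n × Fin n) := Finset.univ.filter
      (fun p : Fin n × Fin n => p.1 ≤ p.2 ∧ lam p.1 - lam p.2 > 1) with hF
  -- each square is at most 1
  have hsq : ∀ i, (lam i) ^ 2 ≤ 1 := by
    intro i
    rw [← hsum]
    exact Finset.single_le_sum (f := fun j => (lam j) ^ 2)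
      (fun j _ => sq_nonneg _) (Finset.mem_univ i)
  have habs : ∀ i, |lam i| ≤ 1 := by
    intro i
    have := hsq i
    nlinarith [abs_nonneg (lam i), sq_abs (lam i)]
  -- signs of coordinates of pairs in F
  have hgap : ∀ p ∈ F, lam p.1 - lam p.2 > 1 := by
    intro p hp
    exact ((Finset.mem_filter.1 hp).2).2
  have hpos : ∀ p ∈ F, 0 < lam p.1 := by
    intro p hp
    have h1 := hgap p hp
    have h2 := abs_le.1 (habs p.2)
    linarith [h2.1]
  have hneg : ∀ p ∈ F, lam p.2 < 0 := by
    intro p hp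
    have h1 := hgap p hp
    have h2 := abs_le.1 (habs p.1)
    linarith [h2.2]
  set A : Finset (Fin n) := F.image Prod.fst with hA
  set B : Finset (Fin n) := F.image Prod.snd with hB
  have hdisj : Disjoint A B := by
    rw [Finset.disjoint_left]
    intro i hiA hiB
    obtain ⟨p, hp, hp1⟩ := Finset.mem_image.1 hiA
    obtain ⟨q, hq, hq2⟩ := Finset.mem_image.1 hiB
    have h1 := hpos p hp
    have h2 := hneg q hq
    rw [hp1] at h1
    rw [hq2] at h2
    linarith
  have hAB : ∑ i ∈ A, (lam i) ^ 2 + ∑ j ∈ B, (lam j) ^ 2 ≤ 1 := by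
    rw [← Finset.sum_union hdisj, ← hsum]
    exact Finset.sum_le_sum_of_subset_of_nonneg (Finset.subset_univ _)
      (fun i _ _ => sq_nonneg _)
  -- degrees
  set mfun : Fin n → ℕ := fun i => (F.filter (fun q => q.1 = i)).card with hmfun
  set dfun : Fin n → ℕ := fun j => (F.filter (fun q => q.2 = j)).card with hdfun
  have hmpos : ∀ p ∈ F, 0 < mfun p.1 := by
    intro p hp
    apply Finset.card_pos.2
    exact ⟨p, Finset.mem_filter.2 ⟨hp, rfl⟩⟩
  have hdpos : ∀ p ∈ F, 0 < dfun p.2 := by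
    intro p hp
    apply Finset.card_pos.2
    exact ⟨p, Finset.mem_filter.2 ⟨hp, rfl⟩⟩
  -- degree sum bound: mfun p.1 + dfun p.2 ≤ F.card + 1
  have hdeg : ∀ p ∈ F, mfun p.1 + dfun p.2 ≤ F.card + 1 := by
    intro p hp
    have hunion : ((F.filter (fun q => q.1 = p.1)) ∪ (F.filter (fun q => q.2 = p.2))).card
        ≤ F.card := by
      apply Finset.card_le_card
      exact Finset.union_subset (Finset.filter_subset _ _) (Finset.filter_subset _ _)
    have hinter : ((F.filter (fun q => q.1 = p.1)) ∩ (F.filter (fun q => q.2 = p.2))).card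
        ≤ 1 := by
      apply Finset.card_le_one.2
      intro q hq r hr
      simp only [Finset.mem_inter, Finset.mem_filter] at hq hr
      exact Prod.ext (hq.1.2.trans hr.1.2.symm) (hq.2.2.trans hr.2.2.symm)
    have hcu := Finset.card_union_add_card_inter (F.filter (fun q => q.1 = p.1))
      (F.filter (fun q => q.2 = p.2))
    have hm' : mfun p.1 = (F.filter (fun q => q.1 = p.1)).card := rfl
    have hd' : dfun p.2 = (F.filter (fun q => q.2 = p.2)).card := rfl
    omega
  -- fiberwise sums
  have hrow : ∑ p ∈ F, (lam p.1) ^ 2 / (mfun p.1 : ℝ) = ∑ i ∈ A, (lam i) ^ 2 := by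
    rw [← Finset.sum_fiberwise_of_maps_to (g := Prod.fst) (t := A)
      (fun p hp => Finset.mem_image_of_mem Prod.fst hp)
      (fun p => (lam p.1) ^ 2 / (mfun p.1 : ℝ))]
    apply Finset.sum_congr rfl
    intro i hi
    have hcongr : ∑ p ∈ F.filter (fun p => p.1 = i), (lam p.1) ^ 2 / (mfun p.1 : ℝ)
        = ∑ _p ∈ F.filter (fun p => p.1 = i), (lam i) ^ 2 / (mfun i : ℝ) := by
      apply Finset.sum_congr rfl
      intro p hp
      have : p.1 = i := (Finset.mem_filter.1 hp).2
      rw [this]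
    rw [hcongr, Finset.sum_const, nsmul_eq_mul]
    have hne : ((F.filter (fun q => q.1 = i)).card : ℝ) ≠ 0 := by
      obtain ⟨p, hp, hp1⟩ := Finset.mem_image.1 hi
      have : 0 < (F.filter (fun q => q.1 = i)).card :=
        Finset.card_pos.2 ⟨p, Finset.mem_filter.2 ⟨hp, hp1⟩⟩
      exact_mod_cast this.ne'
    rw [hmfun]
    field_simp
  have hcol : ∑ p ∈ F, (lam p.2) ^ 2 / (dfun p.2 : ℝ) = ∑ j ∈ B, (lam j) ^ 2 := by
    rw [← Finset.sum_fiberwise_of_maps_to (g := Prod.snd) (t := B)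
      (fun p hp => Finset.mem_image_of_mem Prod.snd hp)
      (fun p => (lam p.2) ^ 2 / (dfun p.2 : ℝ))]
    apply Finset.sum_congr rfl
    intro j hj
    have hcongr : ∑ p ∈ F.filter (fun p => p.2 = j), (lam p.2) ^ 2 / (dfun p.2 : ℝ)
        = ∑ _p ∈ F.filter (fun p => p.2 = j), (lam j) ^ 2 / (dfun j : ℝ) := by
      apply Finset.sum_congr rfl
      intro p hp
      have : p.2 = j := (Finset.mem_filter.1 hp).2
      rw [this]
    rw [hcongr, Finset.sum_const, nsmul_eq_mul]
    have hne : ((F.filter (fun q => q.2 = j)).card : ℝ) ≠ 0 := by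
      obtain ⟨p, hp, hp2⟩ := Finset.mem_image.1 hj
      have : 0 < (F.filter (fun q => q.2 = j)).card :=
        Finset.card_pos.2 ⟨p, Finset.mem_filter.2 ⟨hp, hp2⟩⟩
      exact_mod_cast this.ne'
    rw [hdfun]
    field_simp
  -- pointwise bound
  have hpoint : ∀ p ∈ F, (lam p.1 - lam p.2) ^ 2
      ≤ ((F.card : ℝ) + 1) * ((lam p.1) ^ 2 / (mfun p.1 : ℝ) + (lam p.2) ^ 2 / (dfun p.2 : ℝ)) := by
    intro p hp
    have hm : (0 : ℝ) < (mfun p.1 : ℝ) := by exact_mod_cast hmpos p hp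
    have hd : (0 : ℝ) < (dfun p.2 : ℝ) := by exact_mod_cast hdpos p hp
    have h1 := two_var_cs (lam p.1) (lam p.2) (mfun p.1 : ℝ) (dfun p.2 : ℝ) hm hd
    have h2 : ((mfun p.1 : ℝ) + (dfun p.2 : ℝ)) ≤ (F.card : ℝ) + 1 := by
      have := hdeg p hp
      exact_mod_cast this
    have h3 : (0 : ℝ) ≤ (lam p.1) ^ 2 / (mfun p.1 : ℝ) + (lam p.2) ^ 2 / (dfun p.2 : ℝ) := by
      positivity
    calc (lam p.1 - lam p.2) ^ 2 ≤ ((mfun p.1 : ℝ) + (dfun p.2 : ℝ)) *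
          ((lam p.1) ^ 2 / (mfun p.1 : ℝ) + (lam p.2) ^ 2 / (dfun p.2 : ℝ)) := h1
      _ ≤ ((F.card : ℝ) + 1) *
          ((lam p.1) ^ 2 / (mfun p.1 : ℝ) + (lam p.2) ^ 2 / (dfun p.2 : ℝ)) :=
        mul_le_mul_of_nonneg_right h2 h3
  -- assemble
  have hsum1 : ∑ p ∈ F, (lam p.1 - lam p.2) ^ 2 ≤ ((F.card : ℝ) + 1) *
      (∑ i ∈ A, (lam i) ^ 2 + ∑ j ∈ B, (lam j) ^ 2) := by
    calc ∑ p ∈ F, (lam p.1 - lam p.2) ^ 2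
        ≤ ∑ p ∈ F, ((F.card : ℝ) + 1) *
            ((lam p.1) ^ 2 / (mfun p.1 : ℝ) + (lam p.2) ^ 2 / (dfun p.2 : ℝ)) :=
          Finset.sum_le_sum hpoint
      _ = ((F.card : ℝ) + 1) *
            (∑ p ∈ F, (lam p.1) ^ 2 / (mfun p.1 : ℝ)
              + ∑ p ∈ F, (lam p.2) ^ 2 / (dfun p.2 : ℝ)) := by
          rw [← Finset.mul_sum, ← Finset.sum_add_distrib]
      _ = ((F.card : ℝ) + 1) * (∑ i ∈ A, (lam i) ^ 2 + ∑ j ∈ B, (lam j) ^ 2) := by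
          rw [hrow, hcol]
  have hcard_nonneg : (0 : ℝ) ≤ (F.card : ℝ) + 1 := by positivity
  have hsum2 : ∑ p ∈ F, (lam p.1 - lam p.2) ^ 2 ≤ (F.card : ℝ) + 1 := by
    calc ∑ p ∈ F, (lam p.1 - lam p.2) ^ 2
        ≤ ((F.card : ℝ) + 1) * (∑ i ∈ A, (lam i) ^ 2 + ∑ j ∈ B, (lam j) ^ 2) := hsum1
      _ ≤ ((F.card : ℝ) + 1) * 1 := mul_le_mul_of_nonneg_left hAB hcard_nonneg
      _ = (F.card : ℝ) + 1 := mul_one _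
  have hfinal : ∑ p ∈ F, ((lam p.1 - lam p.2) ^ 2 - 1)
      = ∑ p ∈ F, (lam p.1 - lam p.2) ^ 2 - (F.card : ℝ) := by
    rw [Finset.sum_sub_distrib, Finset.sum_const, nsmul_eq_mul, mul_one]
  rw [hfinal]
  linarith
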